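/- (Functional equation of finite star-multiple polylogarithms) Let p be a prime and $\Bbbk$ an index with Hoffman dual $\Bbbk^\vee$. Then $\text{£}^{\star}_{p, \Bbbk}(t) \equiv (t^{p} - 1)\, \text{£}^{\star}_{p, \Bbbk^{\vee}}\!\left(\frac{t}{t-1}\right) - t^{p}\, \zeta^{\star}_{p}(\Bbbk^{\vee}) \pmod{p}$, where both sides are rational functions in t with coefficients in $\mathbb{Z}_{(p)}$ and the left side is a polynomial; equivalently the identity holds after multiplying by $(t-1)^{p-1}$ to clear denominators. -/

import Mathlib

/-!
Group the terms of every star sum by the value `s = n₁` of the largest variable. The fibre sums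
of an index are iterated sums read off from its word in `{0, 1}`, and the Hoffman dual flips the
word. On fibre sums, flipping the word is the binomial transform
`g ↦ ∑ᵤ (-1)^{u-1} C(s-1, u-1) g(u)`, exactly over `ℚ`. Modulo `p`, `∑_{s=u}^{p-1} (-1)^{u-1} C(s-1, u-1) t^s ≡ t^u (t-1)^{p-u} - t^p`
and `(t-1)^p ≡ t^p - 1`, which turn the generating polynomial of the transformed fibre sums into
the right-hand side. All fibre sums become integers after multiplication by `((p-1)!)^w`, a
number prime to `p`, so the congruence can be checked in `ℤ/p`.
-/

open Polynomial

/-- The finite set of weakly decreasing tuples `N ≥ n_1 ≥ n_2 ≥ ⋯ ≥ n_m ≥ 1`, encoded as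
functions `Fin m → ℕ`. -/
def decTuples (m N : ℕ) : Finset (Fin m → ℕ) :=
  (Fintype.piFinset fun _ => Finset.Icc 1 N).filter fun n => ∀ i j : Fin m, i ≤ j → n j ≤ n i

/-- The set of partial sums `{k_1, k_1 + k_2, …, k_1 + ⋯ + k_{m-1}}` of an index
`𝕜 = (k_1, …, k_m)`, the total sum being removed. -/
def commaSet {m : ℕ} (k : Fin m → ℕ) : Finset ℕ :=
  (Finset.image (fun i : Fin m => ∑ j ∈ Finset.Iic i, k j) Finset.univ).erase (∑ j, k j)

/-- `c ∈ p ℤ_(p)`. -/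
def InPZp (p : ℕ) (c : ℚ) : Prop :=
  ∃ a b : ℤ, ¬ (p : ℤ) ∣ b ∧ (b : ℚ) * c = (p : ℚ) * (a : ℚ)

/-- The one-variable finite star-multiple polylogarithm
`£^⋆_{p,𝕜}(t) = ∑_{p-1 ≥ n_1 ≥ ⋯ ≥ n_m ≥ 1} t^{n_1}/(n_1^{k_1} ⋯ n_m^{k_m})` over `ℚ`. -/
noncomputable def Lstar (p m : ℕ) (hm : 0 < m) (k : Fin m → ℕ) : Polynomial ℚ :=
  ∑ n ∈ decTuples m (p - 1),
    C ((1 : ℚ) / ∏ i, (n i : ℚ) ^ (k i)) * X ^ (n ⟨0, hm⟩)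

/-- `(t-1)^{p-1} £^⋆_{p,𝕜}(t/(t-1))`: the polynomial obtained from `£^⋆_{p,𝕜}(t/(t-1))` by
clearing the denominators (each term `(t/(t-1))^{n_1}` becomes `t^{n_1} (t-1)^{p-1-n_1}`). -/
noncomputable def LstarFrac (p m : ℕ) (hm : 0 < m) (k : Fin m → ℕ) : Polynomial ℚ :=
  ∑ n ∈ decTuples m (p - 1),
    C ((1 : ℚ) / ∏ i, (n i : ℚ) ^ (k i)) * X ^ (n ⟨0, hm⟩) * (X - 1) ^ (p - 1 - n ⟨0, hm⟩)

open Finset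
open scoped Nat

section BinomialTransform

variable {R : Type*} [CommRing R]

def binomialTransform (g : ℕ → R) (s : ℕ) : R :=
  ∑ u ∈ Icc 1 s, (-1) ^ (u - 1) * ((s - 1).choose (u - 1) : R) * g u

lemma map_binomialTransform {S : Type*} [CommRing S] (f : R →+* S) (g : ℕ → R) (s : ℕ) :
    f (binomialTransform g s) = binomialTransform (f ∘ g) s := by
  simp [binomialTransform]

lemma mul_binomialTransform (c : R) (g : ℕ → R) (s : ℕ) :
    c * binomialTransform g s = binomialTransform (fun u => c * g u) s := by
  simp only [binomialTransform, mul_sum]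
  exact sum_congr rfl fun _ _ => by ring

end BinomialTransform

lemma sum_Icc_neg_one_pow_mul_choose {s v : ℕ} (hv : 1 ≤ v) (hs : 1 ≤ s) :
    ∑ u ∈ Icc v s, (-1 : ℚ) ^ (u - 1) * s.choose u = (-1) ^ (v - 1) * (s - 1).choose (v - 1) := by
  induction v, hv using Nat.le_induction with
  | base =>
    have htotal := Int.alternating_sum_range_choose_of_ne (n := s) (by omega)
    rw [sum_range_succ'] at htotal
    rw [← Ico_add_one_right_eq_Icc, sum_Ico_eq_sum_range]
    have := congrArg (Int.cast : ℤ → ℚ) htotal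
    push_cast at this
    simp only [pow_succ, mul_neg, mul_one, neg_mul, sum_neg_distrib, Nat.choose_zero_right,
      Nat.cast_one, add_tsub_cancel_right, add_comm 1, tsub_self, pow_zero] at this ⊢
    linarith
  | succ v hv ih =>
    rcases lt_or_ge s v with h | h
    · rw [Icc_eq_empty (by omega), Nat.choose_eq_zero_of_lt (by omega)]
      simp
    · rw [← insert_Icc_add_one_left_eq_Icc (by omega), sum_insert (by simp)] at ih
      obtain ⟨a, rfl⟩ : ∃ a, s = a + 1 := ⟨s - 1, by omega⟩
      obtain ⟨b, rfl⟩ : ∃ b, v = b + 1 := ⟨v - 1, by omega⟩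
      simp only [Nat.add_sub_cancel, Nat.choose_succ_succ, Nat.cast_add, pow_succ] at ih ⊢
      linarith

lemma inv_mul_choose {s v : ℕ} (hs : 1 ≤ s) (hv : 1 ≤ v) :
    (s : ℚ)⁻¹ * s.choose v = (v : ℚ)⁻¹ * (s - 1).choose (v - 1) := by
  obtain ⟨a, rfl⟩ : ∃ a, s = a + 1 := ⟨s - 1, by omega⟩
  obtain ⟨b, rfl⟩ : ∃ b, v = b + 1 := ⟨v - 1, by omega⟩
  have h := Nat.add_one_mul_choose_eq a b
  simp only [Nat.add_sub_cancel]
  field_simp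
  exact_mod_cast h.symm

lemma sum_Icc_choose_sub_one {s v : ℕ} (hv : 1 ≤ v) :
    ∑ u ∈ Icc v s, ((u - 1).choose (v - 1) : ℚ) = s.choose v := by
  obtain ⟨b, rfl⟩ : ∃ b, v = b + 1 := ⟨v - 1, by omega⟩
  rcases Nat.eq_zero_or_pos s with rfl | hs
  · simp
  obtain ⟨a, rfl⟩ : ∃ a, s = a + 1 := ⟨s - 1, by omega⟩
  rw [← map_add_right_Icc, sum_map]
  exact_mod_cast Nat.sum_Icc_choose a b

lemma sum_Icc_sum_Icc_comm {M : Type*} [AddCommMonoid M] (s : ℕ) (f : ℕ → ℕ → M) :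
    ∑ u ∈ Icc 1 s, ∑ v ∈ Icc 1 u, f u v = ∑ v ∈ Icc 1 s, ∑ u ∈ Icc v s, f u v :=
  sum_comm' fun u v => by simp only [mem_Icc]; omega

lemma binomialTransform_inv {s : ℕ} (hs : 1 ≤ s) :
    binomialTransform (fun u => (u : ℚ)⁻¹) s = (s : ℚ)⁻¹ := by
  calc binomialTransform (fun u => (u : ℚ)⁻¹) s
      = (s : ℚ)⁻¹ * ∑ u ∈ Icc 1 s, (-1 : ℚ) ^ (u - 1) * s.choose u := by
        rw [binomialTransform, mul_sum]
        refine sum_congr rfl fun u hu => ?_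
        linear_combination (-(-1) ^ (u - 1) : ℚ) * inv_mul_choose hs (mem_Icc.mp hu).1
    _ = (s : ℚ)⁻¹ := by rw [sum_Icc_neg_one_pow_mul_choose le_rfl hs]; simp

lemma binomialTransform_inv_mul_sum_Icc {s : ℕ} (hs : 1 ≤ s) (g : ℕ → ℚ) :
    binomialTransform (fun u => (u : ℚ)⁻¹ * ∑ v ∈ Icc 1 u, g v) s
      = (s : ℚ)⁻¹ * binomialTransform g s := by
  calc binomialTransform (fun u => (u : ℚ)⁻¹ * ∑ v ∈ Icc 1 u, g v) s
      = ∑ v ∈ Icc 1 s, ∑ u ∈ Icc v s, (s : ℚ)⁻¹ * ((-1) ^ (u - 1) * s.choose u) * g v := by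
        rw [binomialTransform, ← sum_Icc_sum_Icc_comm]
        refine sum_congr rfl fun u hu => ?_
        rw [mul_sum, mul_sum]
        refine sum_congr rfl fun v _ => ?_
        linear_combination (-(-1) ^ (u - 1) * g v : ℚ) * inv_mul_choose hs (mem_Icc.mp hu).1
    _ = (s : ℚ)⁻¹ * binomialTransform g s := by
        rw [binomialTransform, mul_sum]
        refine sum_congr rfl fun v hv => ?_
        rw [← sum_mul, ← mul_sum, sum_Icc_neg_one_pow_mul_choose (mem_Icc.mp hv).1 hs]
        ring

lemma binomialTransform_inv_mul {s : ℕ} (hs : 1 ≤ s) (g : ℕ → ℚ) :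
    binomialTransform (fun v => (v : ℚ)⁻¹ * g v) s
      = (s : ℚ)⁻¹ * ∑ u ∈ Icc 1 s, binomialTransform g u := by
  calc binomialTransform (fun v => (v : ℚ)⁻¹ * g v) s
      = (s : ℚ)⁻¹ * ∑ v ∈ Icc 1 s, (-1) ^ (v - 1) * (s.choose v : ℚ) * g v := by
        rw [binomialTransform, mul_sum]
        refine sum_congr rfl fun v hv => ?_
        linear_combination (-(-1) ^ (v - 1) * g v : ℚ) * inv_mul_choose hs (mem_Icc.mp hv).1
    _ = (s : ℚ)⁻¹ * ∑ u ∈ Icc 1 s, binomialTransform g u := by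
        simp only [binomialTransform]
        rw [sum_Icc_sum_Icc_comm]
        congr 1
        refine sum_congr rfl fun v hv => ?_
        rw [← sum_mul, ← mul_sum, sum_Icc_choose_sub_one (mem_Icc.mp hv).1]

/-- For the word `0^{k₁-1} 1 0^{k₂-1} 1 ⋯ 1 0^{k_m-1}` of an index `k` (`false` = 0),
`wordStarSum w s` is the star sum of `∏ nᵢ^{-kᵢ}` over `s = n₁ ≥ n₂ ≥ ⋯ ≥ n_m ≥ 1`. -/
def wordStarSum : List Bool → ℕ → ℚ
  | [], s => (s : ℚ)⁻¹
  | false :: w, s => (s : ℚ)⁻¹ * wordStarSum w s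
  | true :: w, s => (s : ℚ)⁻¹ * ∑ u ∈ Icc 1 s, wordStarSum w u

theorem wordStarSum_eq_binomialTransform (w : List Bool) {s : ℕ} (hs : 1 ≤ s) :
    wordStarSum w s = binomialTransform (wordStarSum (w.map not)) s := by
  induction w generalizing s with
  | nil => exact (binomialTransform_inv hs).symm
  | cons b w ih =>
    cases b
    · rw [wordStarSum, ih hs]
      exact (binomialTransform_inv_mul_sum_Icc hs _).symm
    · rw [wordStarSum, sum_congr rfl fun u hu => ih (mem_Icc.mp hu).1]
      exact (binomialTransform_inv_mul hs _).symm

lemma wordStarSum_replicate_false_append (j s : ℕ) (w : List Bool) :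
    wordStarSum (List.replicate j false ++ w) s = (s : ℚ)⁻¹ ^ j * wordStarSum w s := by
  induction j with
  | zero => simp
  | succ j ih => rw [List.replicate_succ, List.cons_append, wordStarSum, ih, pow_succ']; ring

def commaWord {m : ℕ} (k : Fin m → ℕ) : List Bool :=
  (List.range (∑ i, k i - 1)).map fun j => decide (j + 1 ∈ commaSet k)

lemma commaWord_eq_map_not {m m' : ℕ} {k : Fin m → ℕ} {k' : Fin m' → ℕ} (hwt : ∑ i, k' i = ∑ i, k i)
    (hdual : ∀ x : ℕ, x ∈ commaSet k' ↔ (0 < x ∧ x < ∑ i, k i ∧ x ∉ commaSet k)) :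
    commaWord k' = (commaWord k).map not := by
  rw [commaWord, commaWord, List.map_map, hwt]
  refine List.map_congr_left fun j hj => ?_
  have := List.mem_range.mp hj
  simp only [Function.comp_apply, hdual]
  grind

lemma commaSet_fin_one (k : Fin 1 → ℕ) : commaSet k = ∅ := by
  simp [commaSet, ← filter_ge_eq_Iic]

lemma Fin.sum_Iic_succ {M : Type*} [AddCommMonoid M] {m : ℕ} (k : Fin (m + 1) → M) (i : Fin m) :
    ∑ j ∈ Iic i.succ, k j = k 0 + ∑ j ∈ Iic i, k j.succ := by
  simp only [← filter_ge_eq_Iic, sum_filter, Fin.sum_univ_succ, Fin.zero_le, if_true,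
    Fin.succ_le_succ_iff]

lemma commaSet_succ {m : ℕ} (k : Fin (m + 2) → ℕ) (hk : ∑ i, Fin.tail k i ≠ 0) :
    commaSet k = insert (k 0) ((commaSet (Fin.tail k)).image (k 0 + ·)) := by
  have hpartial : image (fun i : Fin (m + 2) => ∑ j ∈ Iic i, k j) univ
      = insert (k 0) ((image (fun i : Fin (m + 1) => ∑ j ∈ Iic i, Fin.tail k j) univ).image
        (k 0 + ·)) := by
    rw [Fin.univ_succ, cons_eq_insert, image_insert, map_eq_image, image_image, image_image]
    congr 1
    exact image_congr fun i _ => Fin.sum_Iic_succ k i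
  rw [commaSet, commaSet, hpartial, Fin.sum_univ_succ,
    erase_insert_of_ne (by simpa [Fin.tail] using hk), image_erase (add_right_injective _)]
  rfl

lemma commaWord_fin_one (k : Fin 1 → ℕ) : commaWord k = List.replicate (k 0 - 1) false := by
  simp [commaWord, commaSet_fin_one]

lemma commaWord_succ {m : ℕ} (k : Fin (m + 2) → ℕ) (hk0 : k 0 ≠ 0)
    (hk : ∑ i, Fin.tail k i ≠ 0) :
    commaWord k = List.replicate (k 0 - 1) false ++ true :: commaWord (Fin.tail k) := by
  have hsum : ∑ i, k i - 1 = (k 0 - 1) + 1 + (∑ i, Fin.tail k i - 1) := by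
    rw [Fin.sum_univ_succ]; simp only [Fin.tail] at hk ⊢; omega
  rw [commaWord, commaWord, hsum, List.range_add, List.range_succ, List.map_append,
    List.map_append, commaSet_succ k hk, List.map_map]
  simp only [List.append_assoc, List.map_cons, List.map_nil, List.cons_append, List.nil_append]
  congr 1
  · rw [List.eq_replicate_iff]
    simp only [List.length_map, List.length_range, List.mem_map, List.mem_range, true_and]
    rintro b ⟨j, hj, rfl⟩
    simp only [mem_insert, mem_image, decide_eq_false_iff_not, not_or, not_exists, not_and]
    exact ⟨by omega, fun _ _ => by omega⟩
  congr 1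
  · simp only [mem_insert, decide_eq_true_eq]; omega
  refine List.map_congr_left fun j _ => ?_
  simp only [Function.comp_apply, mem_insert, mem_image, decide_eq_decide]
  constructor
  · rintro (h | ⟨y, hy, hxy⟩)
    · omega
    · rwa [show j + 1 = y by omega]
  · exact fun h => Or.inr ⟨j + 1, h, by omega⟩

lemma mem_decTuples {m N : ℕ} {n : Fin m → ℕ} :
    n ∈ decTuples m N ↔ (∀ i, n i ∈ Icc 1 N) ∧ ∀ i j, i ≤ j → n j ≤ n i := by
  simp [decTuples, Fintype.mem_piFinset]

lemma cons_mem_decTuples {m N s : ℕ} {t : Fin m → ℕ} :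
    (Fin.cons s t : Fin (m + 1) → ℕ) ∈ decTuples (m + 1) N ↔ s ∈ Icc 1 N ∧ t ∈ decTuples m s := by
  simp only [mem_decTuples, Fin.forall_fin_succ, Fin.cons_zero, Fin.cons_succ, le_refl,
    Fin.succ_le_succ_iff, Fin.zero_le, mem_Icc, Fin.le_zero_iff, Fin.succ_ne_zero, false_imp_iff,
    true_and, imp_self, forall_const]
  constructor
  · rintro ⟨⟨hs, ht⟩, hts, hmono⟩
    exact ⟨hs, fun i => ⟨(ht i).1, hts i⟩, hmono⟩
  · rintro ⟨hs, ht, hmono⟩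
    exact ⟨⟨hs, fun i => ⟨(ht i).1, (ht i).2.trans hs.2⟩⟩, fun i => (ht i).2, hmono⟩

lemma sum_decTuples_succ {M : Type*} [AddCommMonoid M] (m N : ℕ) (F : (Fin (m + 1) → ℕ) → M) :
    ∑ n ∈ decTuples (m + 1) N, F n = ∑ s ∈ Icc 1 N, ∑ t ∈ decTuples m s, F (Fin.cons s t) := by
  rw [sum_sigma']
  refine sum_nbij' (fun n => ⟨n 0, Fin.tail n⟩) (fun q => Fin.cons q.1 q.2) ?_ ?_ ?_ ?_ ?_
  · intro n hn
    rw [← Fin.cons_self_tail n, cons_mem_decTuples] at hn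
    simpa using hn
  · rintro ⟨s, t⟩ hq
    exact cons_mem_decTuples.mpr (mem_sigma.mp hq)
  · exact fun n _ => Fin.cons_self_tail n
  · rintro ⟨s, t⟩ _
    simp
  · exact fun n _ => by rw [Fin.cons_self_tail]

def starFiber {m : ℕ} (k : Fin (m + 1) → ℕ) (s : ℕ) : ℚ :=
  ∑ t ∈ decTuples m s, (∏ i, ((Fin.cons s t : Fin (m + 1) → ℕ) i : ℚ) ^ k i)⁻¹

lemma starFiber_fin_one (k : Fin 1 → ℕ) (s : ℕ) : starFiber k s = ((s : ℚ) ^ k 0)⁻¹ := by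
  simp [starFiber, decTuples]

lemma starFiber_succ {m : ℕ} (k : Fin (m + 2) → ℕ) (s : ℕ) :
    starFiber k s = ((s : ℚ) ^ k 0)⁻¹ * ∑ u ∈ Icc 1 s, starFiber (Fin.tail k) u := by
  rw [starFiber, sum_decTuples_succ, mul_sum]
  refine sum_congr rfl fun u _ => ?_
  rw [starFiber, mul_sum]
  refine sum_congr rfl fun t _ => ?_
  rw [Fin.prod_univ_succ, mul_inv]
  rfl

theorem starFiber_eq_wordStarSum {m : ℕ} (k : Fin (m + 1) → ℕ) (hk : ∀ i, k i ≠ 0) :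
    starFiber k = wordStarSum (commaWord k) := by
  induction m with
  | zero =>
    funext s
    rw [starFiber_fin_one, commaWord_fin_one, ← List.append_nil (List.replicate _ _),
      wordStarSum_replicate_false_append, wordStarSum, ← pow_succ,
      Nat.sub_add_cancel (Nat.one_le_iff_ne_zero.mpr (hk 0)), inv_pow]
  | succ m ih =>
    funext s
    have htail : ∑ i, Fin.tail k i ≠ 0 :=
      (sum_pos (fun i _ => Nat.pos_of_ne_zero (hk i.succ)) univ_nonempty).ne'
    rw [starFiber_succ, commaWord_succ k (hk 0) htail, wordStarSum_replicate_false_append,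
      wordStarSum, ih (Fin.tail k) (fun i => hk i.succ), ← mul_assoc, ← pow_succ,
      Nat.sub_add_cancel (Nat.one_le_iff_ne_zero.mpr (hk 0)), inv_pow]

lemma Lstar_eq_sum_starFiber (p m : ℕ) (hm : 0 < m + 1) (k : Fin (m + 1) → ℕ) :
    Lstar p (m + 1) hm k = ∑ s ∈ Icc 1 (p - 1), C (starFiber k s) * X ^ s := by
  rw [Lstar, sum_decTuples_succ]
  refine sum_congr rfl fun s _ => ?_
  rw [starFiber, map_sum, sum_mul]
  refine sum_congr rfl fun t _ => ?_
  rw [one_div]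
  rfl

lemma LstarFrac_eq_sum_starFiber (p m : ℕ) (hm : 0 < m + 1) (k : Fin (m + 1) → ℕ) :
    LstarFrac p (m + 1) hm k
      = ∑ s ∈ Icc 1 (p - 1), C (starFiber k s) * X ^ s * (X - 1) ^ (p - 1 - s) := by
  rw [LstarFrac, sum_decTuples_succ]
  refine sum_congr rfl fun s _ => ?_
  rw [starFiber, map_sum, sum_mul, sum_mul]
  refine sum_congr rfl fun t _ => ?_
  rw [one_div]
  rfl

lemma sum_decTuples_eq_sum_starFiber (N m : ℕ) (k : Fin (m + 1) → ℕ) :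
    ∑ n ∈ decTuples (m + 1) N, (1 : ℚ) / ∏ i, (n i : ℚ) ^ k i = ∑ s ∈ Icc 1 N, starFiber k s := by
  rw [sum_decTuples_succ]
  simp only [one_div, starFiber]

lemma prod_pow_dvd_factorial_pow {m N w : ℕ} {n : Fin m → ℕ} (k : Fin m → ℕ)
    (hn : ∀ i, n i ∈ Icc 1 N) (hw : ∑ i, k i ≤ w) : ∏ i, n i ^ k i ∣ N ! ^ w :=
  calc ∏ i, n i ^ k i ∣ ∏ i, N ! ^ k i :=
        prod_dvd_prod_of_dvd _ _ fun i _ =>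
          pow_dvd_pow_of_dvd (Nat.dvd_factorial (mem_Icc.mp (hn i)).1 (mem_Icc.mp (hn i)).2) _
    _ = N ! ^ ∑ i, k i := prod_pow_eq_pow_sum _ _ _
    _ ∣ N ! ^ w := pow_dvd_pow _ hw

lemma exists_intCast_eq_factorial_pow_mul_starFiber {m N w s : ℕ} (k : Fin (m + 1) → ℕ)
    (hw : ∑ i, k i ≤ w) (hs : s ∈ Icc 1 N) :
    ∃ z : ℤ, (z : ℚ) = (N ! ^ w : ℕ) * starFiber k s := by
  refine ⟨∑ t ∈ decTuples m s, ((N ! ^ w / ∏ i, (Fin.cons s t : Fin (m + 1) → ℕ) i ^ k i : ℕ) : ℤ),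
    ?_⟩
  rw [starFiber, mul_sum, Int.cast_sum]
  refine sum_congr rfl fun t ht => ?_
  have hn := (mem_decTuples.mp (cons_mem_decTuples.mpr ⟨hs, ht⟩)).1
  have hpos : (∏ i, (Fin.cons s t : Fin (m + 1) → ℕ) i ^ k i : ℚ) ≠ 0 :=
    prod_ne_zero_iff.mpr fun i _ => pow_ne_zero _ (by have := (mem_Icc.mp (hn i)).1; positivity)
  rw [Int.cast_natCast, Nat.cast_div (prod_pow_dvd_factorial_pow k hn hw) (by exact_mod_cast hpos),
    div_eq_mul_inv]
  push_cast
  rfl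

section PolylogDefect

variable {R : Type*} [CommRing R]

/-- `(t-1)^{p-1}` times the difference of the two sides of the functional equation, in terms of
the fibre sums `a` of `k` and `b` of `k^∨`. -/
noncomputable def polylogDefect (p : ℕ) (a b : ℕ → R) : R[X] :=
  (X - 1) ^ (p - 1) * ∑ s ∈ Icc 1 (p - 1), C (a s) * X ^ s
    - ((X ^ p - 1) * ∑ s ∈ Icc 1 (p - 1), C (b s) * X ^ s * (X - 1) ^ (p - 1 - s)
      - X ^ p * (X - 1) ^ (p - 1) * C (∑ s ∈ Icc 1 (p - 1), b s))

lemma polylogDefect_congr {p : ℕ} {a a' b b' : ℕ → R} (ha : ∀ s ∈ Icc 1 (p - 1), a s = a' s)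
    (hb : ∀ s ∈ Icc 1 (p - 1), b s = b' s) : polylogDefect p a b = polylogDefect p a' b' := by
  rw [polylogDefect, polylogDefect, sum_congr rfl fun s hs => congrArg (C · * X ^ s) (ha s hs),
    sum_congr rfl fun s hs => congrArg (fun c => C c * X ^ s * (X - 1) ^ (p - 1 - s)) (hb s hs),
    sum_congr rfl hb]

lemma map_polylogDefect {S : Type*} [CommRing S] (f : R →+* S) (p : ℕ) (a b : ℕ → R) :
    (polylogDefect p a b).map f = polylogDefect p (f ∘ a) (f ∘ b) := by
  simp [polylogDefect, Polynomial.map_sum]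

lemma C_mul_polylogDefect (c : R) (p : ℕ) (a b : ℕ → R) :
    C c * polylogDefect p a b = polylogDefect p (fun s => c * a s) (fun s => c * b s) := by
  simp only [polylogDefect, map_mul, map_sum, mul_assoc, ← mul_sum]
  ring

lemma X_sub_one_mul_sum_Icc_choose (u N : ℕ) (hu : 1 ≤ u) :
    (X - 1 : R[X]) * ∑ s ∈ Icc (u + 1) N, ((s - 1).choose u : R[X]) * X ^ s
      = (N.choose u : R[X]) * X ^ (N + 1)
        - X * ∑ s ∈ Icc u N, ((s - 1).choose (u - 1) : R[X]) * X ^ s := by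
  induction N with
  | zero => simp [Nat.choose_eq_zero_of_lt hu, Icc_eq_empty_of_lt (by omega : 0 < u)]
  | succ N ih =>
    rcases lt_or_ge N u with h | h
    · rw [Icc_eq_empty_of_lt (by omega : N + 1 < u + 1)]
      rcases (show N + 1 < u ∨ N + 1 = u by omega) with h' | rfl
      · simp [Nat.choose_eq_zero_of_lt h', Icc_eq_empty_of_lt h']
      · simp only [sum_empty, mul_zero, Nat.choose_self, Nat.cast_one, one_mul, Icc_self,
          add_tsub_cancel_right, sum_singleton]
        ring
    · rw [sum_Icc_succ_top (by omega), sum_Icc_succ_top (by omega), mul_add, ih]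
      obtain ⟨v, rfl⟩ : ∃ v, u = v + 1 := ⟨u - 1, by omega⟩
      simp only [Nat.add_sub_cancel, Nat.choose_succ_succ, Nat.cast_add]
      ring

lemma cast_choose_pred_of_charP {p : ℕ} (hp : p.Prime) [CharP R p] {u : ℕ} (hu : u ≤ p - 1) :
    ((p - 1).choose u : R) = (-1) ^ u := by
  induction u with
  | zero => simp
  | succ u ih =>
    have hpascal : ((p - 1).choose u : R) + (p - 1).choose (u + 1) = p.choose (u + 1) := by
      rw [← Nat.cast_add, ← Nat.choose_succ_succ', Nat.sub_add_cancel hp.one_le]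
    rw [(CharP.cast_eq_zero_iff R p _).mpr (hp.dvd_choose_self (by omega) (by omega)),
      ih (by omega)] at hpascal
    linear_combination hpascal

lemma X_sub_one_mul_sum_Icc_X_pow (n : ℕ) :
    (X - 1 : R[X]) * ∑ s ∈ Icc 1 n, X ^ s = X ^ (n + 1) - X := by
  have hgeom := mul_geom_sum (X : R[X]) (n + 1)
  rw [sum_range_succ'] at hgeom
  rw [← Ico_add_one_right_eq_Icc, sum_Ico_eq_sum_range, Nat.add_sub_cancel]
  simp only [add_comm 1] at hgeom ⊢
  linear_combination hgeom

lemma sum_Icc_neg_one_pow_choose_mul_X_pow {p : ℕ} [Fact p.Prime] [CharP R p] {u : ℕ}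
    (hu : 1 ≤ u) (hup : u ≤ p - 1) :
    ∑ s ∈ Icc u (p - 1), (-1) ^ (u - 1) * ((s - 1).choose (u - 1) : R[X]) * X ^ s
      = X ^ u * (X - 1) ^ (p - u) - X ^ p := by
  have hp : p.Prime := Fact.out
  have hfrob : (X - 1 : R[X]) ^ p = X ^ p - 1 := by simpa using sub_pow_char (X : R[X]) (1 : R[X])
  have hreg : IsLeftRegular (X - 1 : R[X]) := by
    simpa using (monic_X_sub_C (1 : R)).isRegular.left
  induction u, hu using Nat.le_induction with
  | base =>
    apply hreg
    simp only [Nat.sub_self, pow_zero, Nat.choose_zero_right, Nat.cast_one, one_mul, pow_one]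
    rw [X_sub_one_mul_sum_Icc_X_pow, Nat.sub_add_cancel hp.one_le]
    have : (X - 1 : R[X]) * (X - 1) ^ (p - 1) = X ^ p - 1 := by
      rw [← pow_succ', Nat.sub_add_cancel hp.one_le, hfrob]
    linear_combination (-X : R[X]) * this
  | succ u hu ih =>
    apply hreg
    obtain ⟨v, rfl⟩ : ∃ v, u = v + 1 := ⟨u - 1, by omega⟩
    have hsq : ((-1 : R[X]) ^ v) ^ 2 = 1 := by rw [← pow_mul, mul_comm, pow_mul]; simp
    have htrans := X_sub_one_mul_sum_Icc_choose (R := R) (v + 1) (p - 1) hu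
    rw [Nat.sub_add_cancel hp.one_le, cast_choose_pred_of_charP hp (by omega)] at htrans
    have hpow : (X - 1 : R[X]) ^ (p - (v + 1)) = (X - 1) * (X - 1) ^ (p - (v + 1 + 1)) := by
      rw [← pow_succ', show p - (v + 1 + 1) + 1 = p - (v + 1) by omega]
    specialize ih (by omega)
    simp only [Nat.add_sub_cancel, mul_assoc, ← mul_sum] at ih htrans ⊢
    linear_combination (-(-1) ^ v : R[X]) * htrans + X * ih + X ^ p * hsq + X ^ (v + 2) * hpow

theorem polylogDefect_eq_zero {p : ℕ} [Fact p.Prime] [CharP R p] {a b : ℕ → R}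
    (hab : ∀ s ∈ Icc 1 (p - 1), a s = binomialTransform b s) : polylogDefect p a b = 0 := by
  have hp : p.Prime := Fact.out
  have hgen : ∑ s ∈ Icc 1 (p - 1), C (a s) * X ^ s
      = ∑ u ∈ Icc 1 (p - 1), C (b u) * (X ^ u * (X - 1) ^ (p - u) - X ^ p) := by
    calc ∑ s ∈ Icc 1 (p - 1), C (a s) * X ^ s
        = ∑ s ∈ Icc 1 (p - 1), ∑ u ∈ Icc 1 s,
            C (b u) * ((-1) ^ (u - 1) * ((s - 1).choose (u - 1) : R[X]) * X ^ s) := by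
          refine sum_congr rfl fun s hs => ?_
          rw [hab s hs, binomialTransform, map_sum, sum_mul]
          refine sum_congr rfl fun u _ => ?_
          simp only [map_mul, map_pow, map_neg, map_one, map_natCast]
          ring
      _ = ∑ u ∈ Icc 1 (p - 1), C (b u) * ∑ s ∈ Icc u (p - 1),
            (-1) ^ (u - 1) * ((s - 1).choose (u - 1) : R[X]) * X ^ s := by
          rw [sum_Icc_sum_Icc_comm]
          simp only [mul_sum]
      _ = _ := sum_congr rfl fun u hu => by
          rw [sum_Icc_neg_one_pow_choose_mul_X_pow (mem_Icc.mp hu).1 (mem_Icc.mp hu).2]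
  have hfrob : (X - 1 : R[X]) ^ p = X ^ p - 1 := by simpa using sub_pow_char (X : R[X]) (1 : R[X])
  rw [polylogDefect, hgen, ← hfrob, map_sum, mul_sum, mul_sum, mul_sum, ← sum_sub_distrib,
    ← sum_sub_distrib]
  refine sum_eq_zero fun u hu => ?_
  have hpow : (X - 1 : R[X]) ^ p * (X - 1) ^ (p - 1 - u)
      = (X - 1) ^ (p - 1) * (X - 1) ^ (p - u) := by
    rw [← pow_add, ← pow_add]
    congr 1
    have := mem_Icc.mp hu
    omega
  linear_combination (-(C (b u) * X ^ u)) * hpow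

end PolylogDefect

lemma inPZp_of_mul_eq_intCast {p D : ℕ} {c : ℚ} {z : ℤ} (hD : ¬ p ∣ D) (hz : (D : ℚ) * c = z)
    (hpz : (p : ℤ) ∣ z) : InPZp p c := by
  obtain ⟨a, rfl⟩ := hpz
  exact ⟨a, D, by exact_mod_cast hD, by rw [Int.cast_natCast, hz]; push_cast; ring⟩

theorem inPZp_coeff_polylogDefect {p D : ℕ} (hp : p.Prime) (hD : ¬ p ∣ D) {a b : ℕ → ℚ}
    (ha : ∀ s ∈ Icc 1 (p - 1), ∃ z : ℤ, (z : ℚ) = D * a s)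
    (hb : ∀ s ∈ Icc 1 (p - 1), ∃ z : ℤ, (z : ℚ) = D * b s)
    (hab : ∀ s ∈ Icc 1 (p - 1), a s = binomialTransform b s) (d : ℕ) :
    InPZp p ((polylogDefect p a b).coeff d) := by
  have : Fact p.Prime := ⟨hp⟩
  choose! A hA using ha
  choose! B hB using hb
  have hAB : ∀ s ∈ Icc 1 (p - 1), A s = binomialTransform B s := by
    intro s hs
    apply Int.cast_injective (α := ℚ)
    have hmap := map_binomialTransform (Int.castRingHom ℚ) B s
    rw [eq_intCast] at hmap
    rw [hA s hs, hab s hs, mul_binomialTransform, hmap]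
    refine sum_congr rfl fun u hu => ?_
    have := mem_Icc.mp hs
    have := mem_Icc.mp hu
    simp [hB u (mem_Icc.mpr ⟨by omega, by omega⟩)]
  have hmod : (polylogDefect p A B).map (Int.castRingHom (ZMod p)) = 0 := by
    rw [map_polylogDefect]
    exact polylogDefect_eq_zero fun s hs => by
      rw [Function.comp_apply, hAB s hs, map_binomialTransform]
  have hcast : C (D : ℚ) * polylogDefect p a b = (polylogDefect p A B).map (Int.castRingHom ℚ) := by
    rw [C_mul_polylogDefect, map_polylogDefect]
    exact polylogDefect_congr (fun s hs => (hA s hs).symm) (fun s hs => (hB s hs).symm)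
  refine inPZp_of_mul_eq_intCast hD (z := (polylogDefect p A B).coeff d) ?_ ?_
  · simpa [coeff_C_mul] using congrArg (coeff · d) hcast
  · rw [← ZMod.intCast_zmod_eq_zero_iff_dvd]
    simpa using congrArg (coeff · d) hmod

/-- Functional equation of finite star-multiple polylogarithms: for a prime `p` and an index
`𝕜` with Hoffman dual `𝕜^∨`,
`£^⋆_{p,𝕜}(t) ≡ (t^p - 1) £^⋆_{p,𝕜^∨}(t/(t-1)) - t^p ζ^⋆_p(𝕜^∨) (mod p)`, the congruence
being stated after multiplying through by `(t-1)^{p-1}` to clear denominators: every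
coefficient of the difference lies in `p ℤ_(p)`. -/
theorem finite_star_functional_equation (p m m' : ℕ) (hp : p.Prime) (hm : 0 < m) (hm' : 0 < m')
    (k : Fin m → ℕ) (k' : Fin m' → ℕ) (hk : ∀ i, 0 < k i) (hk' : ∀ i, 0 < k' i)
    (hwt : ∑ i, k' i = ∑ i, k i)
    (hdual : ∀ x : ℕ, x ∈ commaSet k' ↔ (0 < x ∧ x < ∑ i, k i ∧ x ∉ commaSet k)) :
    ∀ d : ℕ, InPZp p
      (((X - 1) ^ (p - 1) * Lstar p m hm k
        - ((X ^ p - 1) * LstarFrac p m' hm' k'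
            - X ^ p * (X - 1) ^ (p - 1)
              * C (∑ n ∈ decTuples m' (p - 1), (1 : ℚ) / ∏ i, (n i : ℚ) ^ (k' i)))).coeff d) := by
  obtain ⟨m₀, rfl⟩ : ∃ m₀, m = m₀ + 1 := ⟨m - 1, by omega⟩
  obtain ⟨m₁, rfl⟩ : ∃ m₁, m' = m₁ + 1 := ⟨m' - 1, by omega⟩
  intro d
  rw [Lstar_eq_sum_starFiber, LstarFrac_eq_sum_starFiber, sum_decTuples_eq_sum_starFiber]
  change InPZp p ((polylogDefect p (starFiber k) (starFiber k')).coeff d)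
  have hD : ¬ p ∣ (p - 1)! ^ ∑ i, k i := fun h => by
    have := (hp.dvd_factorial).mp (hp.dvd_of_dvd_pow h)
    have := hp.pos
    omega
  refine inPZp_coeff_polylogDefect hp hD
    (fun s hs => exists_intCast_eq_factorial_pow_mul_starFiber k le_rfl hs)
    (fun s hs => exists_intCast_eq_factorial_pow_mul_starFiber k' hwt.le hs) (fun s hs => ?_) d
  rw [starFiber_eq_wordStarSum k fun i => (hk i).ne',
    starFiber_eq_wordStarSum k' fun i => (hk' i).ne', commaWord_eq_map_not hwt hdual]
  exact wordStarSum_eq_binomialTransform _ (mem_Icc.mp hs).1
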